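/- arXiv:1811.12854 — 3 statements merged into one kernel-verified Lean document; each statement's English description precedes it below -/
import Mathlib

section
/- Let F be a non-archimedean local field with ring of integers 𝔬, and let S = [[a, b/2],[b/2, c]] be a symmetric matrix over F with a, b ∈ 𝔬, c ∈ 𝔬ˣ, and nonzero discriminant d = b² − 4ac. Let T(F) = {g ∈ GL₂(F) : gᵀSg = det(g)·S}, identified with Lˣ where L = F(√d) (or F ⊕ F if d is a square). Then for every n ≥ 0, the group T(F) ∩ {g ∈ GL₂(𝔬) : g ≡ [[*,0],[*,*]] mod 𝔭ⁿ} equals T(F) ∩ {g ∈ GL₂(𝔬) : g ≡ λ·1₂ mod 𝔭ⁿ, λ ∈ 𝔬ˣ}. -/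
open Matrix

lemma padic_isUnit_iff_not_dvd {p : ℕ} [Fact p.Prime] (x : ℤ_[p]) :
    IsUnit x ↔ ¬ ((p : ℤ_[p]) ∣ x) := by
  rw [PadicInt.isUnit_iff]
  constructor
  · intro h hd
    rw [← PadicInt.norm_lt_one_iff_dvd] at hd
    rw [h] at hd
    exact lt_irrefl 1 hd
  · intro h
    rcases lt_or_eq_of_le (PadicInt.norm_le_one x) with h1 | h1
    · exact absurd (PadicInt.norm_lt_one_iff_dvd x |>.mp h1) h
    · exact h1

lemma unit_dvd_cancel {p : ℕ} [Fact p.Prime] {u x y : ℤ_[p]} (hu : IsUnit u)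
    (h : y ∣ u * x) : y ∣ x := by
  obtain ⟨v, hv⟩ := hu
  obtain ⟨w, hw⟩ := h
  refine ⟨(↑v⁻¹ : ℤ_[p]) * w, ?_⟩
  have : (↑v⁻¹ : ℤ_[p]) * (u * x) = x := by
    rw [← hv, ← mul_assoc, Units.inv_mul, one_mul]
  rw [← this, hw]
  ring

theorem torus_congruence_subgroups_eq
    (p : ℕ) [Fact p.Prime] (a b : ℤ_[p]) (c : ℤ_[p]ˣ)
    (S : Matrix (Fin 2) (Fin 2) ℚ_[p])
    (hS : S = !![((a : ℤ_[p]) : ℚ_[p]), ((b : ℤ_[p]) : ℚ_[p]) / 2;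
                 ((b : ℤ_[p]) : ℚ_[p]) / 2, ((c : ℤ_[p]) : ℚ_[p])])
    (hd : ((b : ℚ_[p])) ^ 2 - 4 * (a : ℚ_[p]) * ((c : ℤ_[p]) : ℚ_[p]) ≠ 0)
    (n : ℕ) :
    {g : Matrix (Fin 2) (Fin 2) ℤ_[p] | IsUnit g.det ∧
        (g.map (fun x : ℤ_[p] => (x : ℚ_[p])))ᵀ * S * g.map (fun x : ℤ_[p] => (x : ℚ_[p]))
          = (g.map (fun x : ℤ_[p] => (x : ℚ_[p]))).det • S ∧
        (p : ℤ_[p]) ^ n ∣ g 0 1}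
      =
    {g : Matrix (Fin 2) (Fin 2) ℤ_[p] | IsUnit g.det ∧
        (g.map (fun x : ℤ_[p] => (x : ℚ_[p])))ᵀ * S * g.map (fun x : ℤ_[p] => (x : ℚ_[p]))
          = (g.map (fun x : ℤ_[p] => (x : ℚ_[p]))).det • S ∧
        ∃ lam : ℤ_[p]ˣ, (p : ℤ_[p]) ^ n ∣ g 0 0 - lam ∧ (p : ℤ_[p]) ^ n ∣ g 1 1 - lam ∧
          (p : ℤ_[p]) ^ n ∣ g 0 1 ∧ (p : ℤ_[p]) ^ n ∣ g 1 0} := by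
  subst hS
  ext g
  simp only [Set.mem_setOf_eq]
  constructor
  · rintro ⟨h1, h2, hβ⟩
    refine ⟨h1, h2, ?_⟩
    rcases Nat.eq_zero_or_pos n with hn | hn
    · exact ⟨1, by simp [hn]⟩
    -- extract entry equations
    have e01 := congrFun (congrFun h2 0) 1
    have e11 := congrFun (congrFun h2 1) 1
    simp [Matrix.mul_apply, Matrix.det_fin_two, Fin.sum_univ_two] at e01 e11
    -- scalar identities over ℤ_[p]
    have Z1 : (c : ℤ_[p]) * g 1 1 * (g 1 1 - g 0 0)
        = -(g 0 1) * (a * g 0 1 + b * g 1 1 + (c : ℤ_[p]) * g 1 0) := by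
      have : ((((c : ℤ_[p]) * g 1 1 * (g 1 1 - g 0 0)) : ℤ_[p]) : ℚ_[p])
          = (((-(g 0 1) * (a * g 0 1 + b * g 1 1 + (c : ℤ_[p]) * g 1 0)) : ℤ_[p]) : ℚ_[p]) := by
        push_cast
        linear_combination e11
      exact Subtype.coe_injective this
    have Z2 : (c : ℤ_[p]) * g 1 1 * g 1 0
        = -(g 0 1) * (a * g 0 0 + b * g 1 0) := by
      have : ((((c : ℤ_[p]) * g 1 1 * g 1 0) : ℤ_[p]) : ℚ_[p])
          = (((-(g 0 1) * (a * g 0 0 + b * g 1 0)) : ℤ_[p]) : ℚ_[p]) := by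
        push_cast
        linear_combination e01
      exact Subtype.coe_injective this
    -- p ∣ g 0 1
    have hpβ : (p : ℤ_[p]) ∣ g 0 1 :=
      dvd_trans (dvd_pow_self (p : ℤ_[p]) hn.ne') hβ
    -- g 1 1 is a unit
    have hdet_not : ¬ ((p : ℤ_[p]) ∣ g.det) := (padic_isUnit_iff_not_dvd _).mp h1
    have hδ : IsUnit (g 1 1) := by
      rw [padic_isUnit_iff_not_dvd]
      intro hdvd
      apply hdet_not
      rw [Matrix.det_fin_two]
      exact dvd_sub (Dvd.dvd.mul_left hdvd _) (Dvd.dvd.mul_right hpβ _)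
    -- p^n ∣ g 1 1 - g 0 0
    have hd1 : (p : ℤ_[p]) ^ n ∣ g 1 1 - g 0 0 := by
      apply unit_dvd_cancel (c.isUnit.mul hδ)
      rw [Z1]
      exact (hβ.neg_right.mul_right _)
    -- p^n ∣ g 1 0
    have hd2 : (p : ℤ_[p]) ^ n ∣ g 1 0 := by
      apply unit_dvd_cancel (c.isUnit.mul hδ)
      rw [Z2]
      exact (hβ.neg_right.mul_right _)
    -- g 0 0 is a unit
    have hα : IsUnit (g 0 0) := by
      rw [padic_isUnit_iff_not_dvd]
      intro hdvd
      have hpδα : (p : ℤ_[p]) ∣ g 1 1 - g 0 0 :=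
        dvd_trans (dvd_pow_self (p : ℤ_[p]) hn.ne') hd1
      have : (p : ℤ_[p]) ∣ g 1 1 := by
        have := dvd_add hpδα hdvd
        simpa using this
      exact ((padic_isUnit_iff_not_dvd _).mp hδ) this
    refine ⟨hα.unit, ?_, ?_, hβ, hd2⟩
    · rw [IsUnit.unit_spec]
      simp
    · rw [IsUnit.unit_spec]
      have : g 1 1 - g 0 0 = g 1 1 - g 0 0 := rfl
      exact hd1
  · rintro ⟨h1, h2, lam, _, _, hβ, _⟩
    exact ⟨h1, h2, hβ⟩
end

section
/- Let F be a field, S = [[a, b/2],[b/2, c]] symmetric over F with d = b²−4ac ≠ 0. Then T_S(F) = {g ∈ GL₂(F) : gᵀSg = det(g)·S} equals the set of invertible elements of the algebra F·1₂ + F·ξ_S, where ξ_S = [[b/2, c],[−a, −b/2]]. -/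
open Matrix

theorem torus_eq_algebra_units
    (F : Type*) [Field F] [CharZero F]
    (a b c : F) (hd : b ^ 2 - 4 * a * c ≠ 0)
    (S ξ : Matrix (Fin 2) (Fin 2) F)
    (hS : S = !![a, b / 2; b / 2, c])
    (hξ : ξ = !![b / 2, c; -a, -b / 2]) :
    {g : Matrix (Fin 2) (Fin 2) F | IsUnit g.det ∧ gᵀ * S * g = g.det • S}
      = {g : Matrix (Fin 2) (Fin 2) F | IsUnit g.det ∧
          ∃ x y : F, g = x • (1 : Matrix (Fin 2) (Fin 2) F) + y • ξ} := by
  subst hS hξ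
  ext g
  simp only [Set.mem_setOf_eq]
  constructor
  · rintro ⟨hu, heq⟩
    refine ⟨hu, ?_⟩
    have hdet : g.det ≠ 0 := by simpa [isUnit_iff_ne_zero] using hu
    have hlin : gᵀ * !![a, b / 2; b / 2, c]
        = !![a, b / 2; b / 2, c] * g.adjugate := by
      have h1 : gᵀ * !![a, b / 2; b / 2, c] * g * g.adjugate
          = (g.det • !![a, b / 2; b / 2, c]) * g.adjugate := by rw [heq]
      rw [Matrix.mul_assoc, Matrix.mul_adjugate, Matrix.smul_mul] at h1
      simp only [Matrix.mul_smul, Matrix.mul_one] at h1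
      exact smul_right_injective _ hdet h1
    set p := g 0 0 with hp
    set q := g 0 1 with hq
    set r := g 1 0 with hr
    set s := g 1 1 with hs
    have hg : g = !![p, q; r, s] := by rw [hp, hq, hr, hs, ← Matrix.eta_fin_two g]
    rw [hg] at hlin
    simp only [Matrix.adjugate_fin_two, Matrix.transpose_apply, Matrix.mul_fin_two] at hlin
    have e00 : p * a + r * (b / 2) = a * s + b / 2 * -r := by
      have := congrFun (congrFun hlin 0) 0
      simpa [Matrix.transpose, Matrix.mul_apply, Fin.sum_univ_succ] using this
    have e01 : p * (b / 2) + r * c = a * -q + b / 2 * p := by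
      have := congrFun (congrFun hlin 0) 1
      simpa [Matrix.transpose, Matrix.mul_apply, Fin.sum_univ_succ] using this
    have e10 : q * a + s * (b / 2) = b / 2 * s + c * -r := by
      have := congrFun (congrFun hlin 1) 0
      simpa [Matrix.transpose, Matrix.mul_apply, Fin.sum_univ_succ] using this
    have e11 : q * (b / 2) + s * c = b / 2 * -q + c * p := by
      have := congrFun (congrFun hlin 1) 1
      simpa [Matrix.transpose, Matrix.mul_apply, Fin.sum_univ_succ] using this
    -- linear relations: a*(p-s) = -b*r ; c*(p-s) = b*q ; a*q = -c*r
    have E1 : a * (p - s) + b * r = 0 := by linear_combination e00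
    have E2 : c * (p - s) - b * q = 0 := by linear_combination -e11
    have E3 : a * q + c * r = 0 := by linear_combination e01
    by_cases hb : b = 0
    · have ha : a ≠ 0 := by
        intro h0; apply hd; rw [hb, h0]; ring
      have hps : p = s := by
        have h1 : a * (p - s) = 0 := by linear_combination E1 - r * hb
        have h2 := (mul_eq_zero.1 h1).resolve_left ha
        exact sub_eq_zero.1 h2
      refine ⟨p, -r / a, ?_⟩
      have hq2 : q = -r / a * c := by
        field_simp
        linear_combination E3
      rw [hg]
      ext i j
      fin_cases i <;> fin_cases j <;>
        simp [Matrix.one_apply, hb, hps, hq2] <;> field_simp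
    · refine ⟨(p + s) / 2, (p - s) / b, ?_⟩
      have hq' : q = (p - s) / b * c := by
        field_simp
        linear_combination -E2
      have hr' : r = (p - s) / b * -a := by
        field_simp
        linear_combination E1
      rw [hg]
      ext i j
      fin_cases i <;> fin_cases j <;>
        simp [Matrix.one_apply, hq', hr'] <;> field_simp <;> ring
  · rintro ⟨hu, x, y, rfl⟩
    refine ⟨hu, ?_⟩
    ext i j
    fin_cases i <;> fin_cases j <;>
      simp [Matrix.mul_apply, Matrix.det_fin_two, Fin.sum_univ_succ, Matrix.one_apply] <;>
      ring
end

section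
/- Let N be a positive integer and suppose u, v, u', v' are integers with gcd(u,v) = gcd(u',v') = 1, v | N, v' | N, and N | uu' + vv'. Then v = gcd(u', N), v' = gcd(u, N), and gcd(v, v') = 1. -/
theorem gcd_structure_of_congruence
    (N u v u' v' : ℤ) (hN : 0 < N)
    (huv : IsCoprime u v) (huv' : IsCoprime u' v')
    (hv : 0 < v) (hv' : 0 < v') (hvN : v ∣ N) (hv'N : v' ∣ N)
    (hcong : N ∣ u * u' + v * v') :
    v = Int.gcd u' N ∧ v' = Int.gcd u N ∧ IsCoprime v v' := by
  -- v divides u * u'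
  have hvuu' : v ∣ u * u' := by
    have h1 : v ∣ u * u' + v * v' := hvN.trans hcong
    have h2 : v ∣ v * v' := Dvd.intro _ rfl
    exact (dvd_add_right h2).mp (by rwa [add_comm] at h1)
  have hvu' : v ∣ u' := huv.symm.dvd_of_dvd_mul_left hvuu'
  -- v' divides u
  have hv'uu' : v' ∣ u * u' := by
    have h1 : v' ∣ u * u' + v * v' := hv'N.trans hcong
    have h2 : v' ∣ v * v' := dvd_mul_left v' v
    exact (dvd_add_right h2).mp (by rwa [add_comm] at h1)
  have hv'u : v' ∣ u := huv'.symm.dvd_of_dvd_mul_right hv'uu'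
  -- v = gcd u' N
  have e1 : v = Int.gcd u' N := by
    have hle : v ∣ (Int.gcd u' N : ℤ) := Int.dvd_coe_gcd hvu' hvN
    have hd1 : (Int.gcd u' N : ℤ) ∣ u' := Int.gcd_dvd_left _ _
    have hd2 : (Int.gcd u' N : ℤ) ∣ N := Int.gcd_dvd_right _ _
    have hdvv' : (Int.gcd u' N : ℤ) ∣ v * v' := by
      have h1 : (Int.gcd u' N : ℤ) ∣ u * u' + v * v' := hd2.trans hcong
      have h2 : (Int.gcd u' N : ℤ) ∣ u * u' := Dvd.dvd.mul_left hd1 u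
      exact (dvd_add_right h2).mp h1
    have hcop : IsCoprime (Int.gcd u' N : ℤ) v' :=
      huv'.of_isCoprime_of_dvd_left hd1
    have hge : (Int.gcd u' N : ℤ) ∣ v := hcop.dvd_of_dvd_mul_right hdvv'
    exact Int.dvd_antisymm hv.le (Int.natCast_nonneg _) hle hge
  have e2 : v' = Int.gcd u N := by
    have hle : v' ∣ (Int.gcd u N : ℤ) := Int.dvd_coe_gcd hv'u hv'N
    have hd1 : (Int.gcd u N : ℤ) ∣ u := Int.gcd_dvd_left _ _
    have hd2 : (Int.gcd u N : ℤ) ∣ N := Int.gcd_dvd_right _ _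
    have hdvv' : (Int.gcd u N : ℤ) ∣ v * v' := by
      have h1 : (Int.gcd u N : ℤ) ∣ u * u' + v * v' := hd2.trans hcong
      have h2 : (Int.gcd u N : ℤ) ∣ u * u' := Dvd.dvd.mul_right hd1 u'
      exact (dvd_add_right h2).mp h1
    have hcop : IsCoprime (Int.gcd u N : ℤ) v :=
      huv.of_isCoprime_of_dvd_left hd1
    have hge : (Int.gcd u N : ℤ) ∣ v' := hcop.dvd_of_dvd_mul_left hdvv'
    exact Int.dvd_antisymm hv'.le (Int.natCast_nonneg _) hle hge
  exact ⟨e1, e2, huv'.of_isCoprime_of_dvd_left hvu'⟩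
end
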